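/- Let G_n be the set of binary words of length n with no two consecutive twos. Then Ψ(ω) = Γ(ω) for every ω ∈ G_n (so Ψ(G_n) = Γ(G_n)), where Ψ and Γ are the inverse Foata map and the extended Steingrímsson map on binary words. -/

import Mathlib

/-- Count the leading letters of a list equal to `a`; return the count and the rest. -/
def leadCount (a : ℕ) : List ℕ → ℕ × List ℕ
  | [] => (0, [])
  | b :: rest =>
    if b = a then
      let p := leadCount a rest
      (p.1 + 1, p.2)
    else (0, b :: rest)

def blocksAux : ℕ → List ℕ → List (ℕ × ℕ)
  | 0, _ => []
  | _, [] => []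
  | fuel + 1, w =>
    let p := leadCount 1 w
    let q := leadCount 2 p.2
    (p.1, q.1) :: blocksAux fuel q.2

/-- The descent-block decomposition `[(m₀,n₀),…,(m_d,n_d)]` of a binary word
`1^{m₀} 2^{n₀} ⋯ 1^{m_d} 2^{n_d}`. -/
def blocks (w : List ℕ) : List (ℕ × ℕ) := blocksAux w.length w

/-- The word `1^{m₀} 2^{n₀} ⋯ 1^{m_d} 2^{n_d}` determined by blocks. -/
def blockWord (bs : List (ℕ × ℕ)) : List ℕ :=
  bs.flatMap fun p => List.replicate p.1 1 ++ List.replicate p.2 2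

/-- `[(m₀,n₀),…,(m_d,n_d)]` is a valid descent-block decomposition:
`m_i > 0` for `1 ≤ i ≤ d` and `n_j > 0` for `0 ≤ j ≤ d-1`. -/
def ValidBlocks (bs : List (ℕ × ℕ)) : Prop :=
  bs ≠ [] ∧ (∀ p ∈ bs.tail, 0 < p.1) ∧ (∀ p ∈ bs.dropLast, 0 < p.2)

/-- A word on the alphabet {1,2}. -/
def IsBinary (w : List ℕ) : Prop := ∀ a ∈ w, a = 1 ∨ a = 2

/-- The descent number of a word. -/
def des (w : List ℕ) : ℕ := (w.zip w.tail).countP fun p => decide (p.2 < p.1)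

/-- The excedance number of a binary word with `k` ones: the number of
positions `i ≤ k` carrying the letter 2. -/
def exc (w : List ℕ) : ℕ := (w.take (w.count 1)).count 2

/-- `Ψ = Φ₁⁻¹` on binary words, via the descent-block decomposition. -/
def psiBlocks (bs : List (ℕ × ℕ)) : List ℕ :=
  List.replicate (bs.headD (0,0)).1 1
    ++ bs.tail.flatMap (fun p => 2 :: List.replicate (p.1 - 1) 1)
    ++ bs.dropLast.flatMap (fun p => List.replicate (p.2 - 1) 2 ++ [1])
    ++ List.replicate (bs.getLastD (0,0)).2 2

def Psi (w : List ℕ) : List ℕ := psiBlocks (blocks w)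

/-- Foata's second fundamental transformation on binary words. -/
def phi2Blocks (bs : List (ℕ × ℕ)) : List ℕ :=
  bs.tail.reverse.flatMap (fun p => List.replicate (p.1 - 1) 1 ++ [2])
    ++ List.replicate (bs.headD (0,0)).1 1
    ++ bs.dropLast.flatMap (fun p => List.replicate (p.2 - 1) 2 ++ [1])
    ++ List.replicate (bs.getLastD (0,0)).2 2

def Phi2 (w : List ℕ) : List ℕ := phi2Blocks (blocks w)

/-- The extended Steingrímsson map `Γ` on binary words. -/
def gammaBlocks (bs : List (ℕ × ℕ)) : List ℕ :=
  match bs with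
  | [] => []
  | [(m0, n0)] => List.replicate m0 1 ++ List.replicate n0 2
  | (m0, n0) :: rest =>
      List.replicate m0 1
        ++ rest.dropLast.flatMap (fun p => 2 :: List.replicate (p.1 - 1) 1)
        ++ (2 :: List.replicate (rest.getLastD (0,0)).1 1)
        ++ (let ns := n0 :: rest.map Prod.snd
            ns.dropLast.dropLast.flatMap (fun nj => List.replicate (nj - 1) 2 ++ [1])
              ++ List.replicate (ns.dropLast.getLastD 0 - 1 + ns.getLastD 0) 2)

def Gamma (w : List ℕ) : List ℕ := gammaBlocks (blocks w)

/-- The involution `φ` on binary words. -/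
def phi (w : List ℕ) : List ℕ :=
  let bs := blocks w
  let ns := bs.map Prod.snd
  let newms : List ℕ :=
    match (bs.map Prod.fst).reverse with
    | [] => []
    | [a] => [a]
    | a :: rest => (a - 1) :: (rest.dropLast ++ [rest.getLastD 0 + 1])
  blockWord (newms.zip ns)

/-- Fibonacci words: binary words with no two consecutive ones. -/
def IsFib (w : List ℕ) : Prop :=
  IsBinary w ∧ w.Chain' fun a b => ¬(a = 1 ∧ b = 1)

def FibSet (n : ℕ) : Set (List ℕ) := {w | IsFib w ∧ w.length = n}

/-- Fibonacci words of length `n` ending with the letter 1. -/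
def FibSet' (n : ℕ) : Set (List ℕ) :=
  {w | IsFib w ∧ w.length = n ∧ w.getLast? = some 1}

/-- Binary words of length `n` with no two consecutive twos. -/
def GSet (n : ℕ) : Set (List ℕ) :=
  {w | IsBinary w ∧ w.length = n ∧ w.Chain' fun a b => ¬(a = 2 ∧ b = 2)}

/-- The word `1^{m₀} 2^{d+n₀-1} 1 2^{n₁-1} ⋯ 1 2^{n_{d-1}-1} 1 2^{n_d}`. -/
def Rword (m0 : ℕ) (ns : List ℕ) : List ℕ :=
  match ns with
  | [] => List.replicate m0 1
  | [n0] => List.replicate m0 1 ++ List.replicate n0 2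
  | n0 :: rest =>
      List.replicate m0 1 ++ List.replicate (rest.length + n0 - 1) 2
        ++ rest.dropLast.flatMap (fun nj => 1 :: List.replicate (nj - 1) 2)
        ++ (1 :: List.replicate (rest.getLastD 0) 2)

def RSet (n : ℕ) : Set (List ℕ) :=
  {w | ∃ m0 ns, m0 ≤ 1 ∧ ns ≠ [] ∧ (∀ j ∈ List.dropLast ns, 1 ≤ j) ∧
        w = Rword m0 ns ∧ w.length = n}

/-- The Fibonacci word `1^{m₀} 2^{n₀} 1 2^{n₁} ⋯ 1 2^{n_d}`. -/
def Fword (m0 : ℕ) (ns : List ℕ) : List ℕ :=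
  List.replicate m0 1 ++ List.replicate (ns.headD 0) 2
    ++ ns.tail.flatMap fun nj => 1 :: List.replicate nj 2

/-!
For `w ∈ G_n` consecutive descent blocks are separated by a single 2, so `n_j = 1` for `j < d`;
moreover `m_i ≥ 1` for `i ≥ 1`. Hence the tail `2^{n_0-1} 1 ⋯ 2^{n_{d-1}-1} 1` of `Ψ w` is `1^d`,
while `Γ w` has one more 1 in its run `1^{m_d}` and the shorter tail `1^{d-1}`: both words are
`1^{m_0} 2 1^{m_1-1} ⋯ 2 1^{m_d-1+d} 2^{n_d}`.
-/

theorem IsBinary.of_suffix {w v : List ℕ} (hw : IsBinary w) (h : v <:+ w) : IsBinary v :=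
  fun a ha => hw a (h.subset ha)

theorem IsBinary.head?_eq {w : List ℕ} (hw : IsBinary w) (hne : w ≠ []) :
    w.head? = some 1 ∨ w.head? = some 2 := by
  obtain ⟨b, t, rfl⟩ := List.exists_cons_of_ne_nil hne
  simpa using hw b List.mem_cons_self

theorem List.flatMap_eq_replicate {α β : Type*} {l : List α} {f : α → List β} {c : β}
    (h : ∀ x ∈ l, f x = [c]) : l.flatMap f = List.replicate l.length c := by
  induction l with
  | nil => rfl
  | cons x l ih =>
    rw [List.flatMap_cons, h x List.mem_cons_self, ih fun y hy => h y (List.mem_cons_of_mem x hy)]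
    rfl

theorem replicate_leadCount_append (a : ℕ) (w : List ℕ) :
    List.replicate (leadCount a w).1 a ++ (leadCount a w).2 = w := by
  induction w with
  | nil => rfl
  | cons b w ih =>
    by_cases h : b = a
    · subst h
      simpa [leadCount, List.replicate_succ] using ih
    · simp [leadCount, h]

theorem leadCount_snd_suffix (a : ℕ) (w : List ℕ) : (leadCount a w).2 <:+ w :=
  ⟨_, replicate_leadCount_append a w⟩

theorem head?_leadCount_snd_ne (a : ℕ) (w : List ℕ) : (leadCount a w).2.head? ≠ some a := by
  induction w with
  | nil => simp [leadCount]
  | cons b w ih =>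
    by_cases h : b = a
    · simpa [leadCount, h] using ih
    · simp [leadCount, h]

theorem leadCount_fst_pos {a : ℕ} {w : List ℕ} (h : w.head? = some a) : 0 < (leadCount a w).1 := by
  rcases w with _ | ⟨b, w⟩
  · simp at h
  · simp_all [leadCount]

theorem leadCount_fst_le_one {a : ℕ} {w : List ℕ} (h : w.IsChain fun x y => ¬(x = a ∧ y = a)) :
    (leadCount a w).1 ≤ 1 := by
  rcases w with _ | ⟨b, _ | ⟨c, w⟩⟩
  · simp [leadCount]
  · by_cases hb : b = a <;> simp [leadCount, hb]
  · by_cases hb : b = a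
    · have hc : c ≠ a := fun hc => (List.isChain_cons_cons.1 h).1 ⟨hb, hc⟩
      simp [leadCount, hb, hc]
    · simp [leadCount, hb]

section FirstBlock

def firstBlock (w : List ℕ) : ℕ × ℕ :=
  ((leadCount 1 w).1, (leadCount 2 (leadCount 1 w).2).1)

def blockRest (w : List ℕ) : List ℕ := (leadCount 2 (leadCount 1 w).2).2

variable {w : List ℕ}

theorem replicate_firstBlock_append_blockRest (w : List ℕ) :
    List.replicate (firstBlock w).1 1 ++ List.replicate (firstBlock w).2 2 ++ blockRest w = w := by
  rw [List.append_assoc, firstBlock, blockRest, replicate_leadCount_append,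
    replicate_leadCount_append]

theorem blockRest_suffix (w : List ℕ) : blockRest w <:+ w :=
  ⟨_, replicate_firstBlock_append_blockRest w⟩

theorem firstBlock_fst_pos (h : w.head? = some 1) : 0 < (firstBlock w).1 :=
  leadCount_fst_pos h

theorem firstBlock_snd_pos (hw : IsBinary w) (hr : blockRest w ≠ []) :
    0 < (firstBlock w).2 := by
  have hsuf := leadCount_snd_suffix 1 w
  have hne : (leadCount 1 w).2 ≠ [] := fun h =>
    hr (List.eq_nil_of_suffix_nil (h ▸ leadCount_snd_suffix 2 _))
  exact leadCount_fst_pos (((hw.of_suffix hsuf).head?_eq hne).resolve_left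
    (head?_leadCount_snd_ne 1 w))

theorem head?_blockRest (hw : IsBinary w) (hr : blockRest w ≠ []) :
    (blockRest w).head? = some 1 :=
  ((hw.of_suffix (blockRest_suffix w)).head?_eq hr).resolve_right (head?_leadCount_snd_ne 2 _)

theorem firstBlock_snd_le_one (h : w.IsChain fun x y => ¬(x = 2 ∧ y = 2)) :
    (firstBlock w).2 ≤ 1 :=
  leadCount_fst_le_one (h.suffix (leadCount_snd_suffix 1 w))

theorem length_blockRest_lt (hw : IsBinary w) (hne : w ≠ []) :
    (blockRest w).length < w.length := by
  have hlen := congrArg List.length (replicate_firstBlock_append_blockRest w)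
  simp only [List.length_append, List.length_replicate] at hlen
  suffices 0 < (firstBlock w).1 + (firstBlock w).2 by omega
  rcases Nat.eq_zero_or_pos (firstBlock w).1 with hm | hm
  · have hrest : (leadCount 1 w).2 = w := by
      have hm : (leadCount 1 w).1 = 0 := hm
      simpa [hm] using replicate_leadCount_append 1 w
    have h2 : w.head? = some 2 := (hw.head?_eq hne).resolve_left fun h1 =>
      (firstBlock_fst_pos h1).ne' hm
    have : 0 < (firstBlock w).2 := leadCount_fst_pos (by rw [hrest]; exact h2)
    omega
  · omega

end FirstBlock

section Blocks

variable {w : List ℕ}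

theorem blocks_nil : blocks [] = [] := rfl

theorem blocksAux_succ {fuel : ℕ} (hw : IsBinary w) (hlen : w.length ≤ fuel) :
    blocksAux (fuel + 1) w = blocksAux fuel w := by
  induction fuel generalizing w with
  | zero => rw [List.eq_nil_of_length_eq_zero (Nat.le_zero.1 hlen)]; rfl
  | succ fuel ih =>
    rcases w with _ | ⟨b, v⟩
    · rfl
    have hrest := length_blockRest_lt hw (List.cons_ne_nil b v)
    show firstBlock _ :: blocksAux (fuel + 1) (blockRest _) = firstBlock _ :: blocksAux fuel (blockRest _)
    rw [ih (hw.of_suffix (blockRest_suffix _)) (by omega)]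

theorem blocksAux_eq_blocks {fuel : ℕ} (hw : IsBinary w) (hlen : w.length ≤ fuel) :
    blocksAux fuel w = blocks w := by
  induction fuel, hlen using Nat.le_induction with
  | base => rfl
  | succ fuel hle ih => rw [blocksAux_succ hw hle, ih]

theorem blocks_cons (hw : IsBinary w) (hne : w ≠ []) :
    blocks w = firstBlock w :: blocks (blockRest w) := by
  obtain ⟨b, v, rfl⟩ := List.exists_cons_of_ne_nil hne
  have hrest := length_blockRest_lt hw hne
  show firstBlock _ :: blocksAux v.length (blockRest _) = _
  rw [blocksAux_eq_blocks (hw.of_suffix (blockRest_suffix _)) (by simpa using hrest)]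

end Blocks

theorem validBlocks_blocks {w : List ℕ} (hw : IsBinary w) (hne : w ≠ []) :
    ValidBlocks (blocks w) := by
  rw [blocks_cons hw hne]
  rcases eq_or_ne (blockRest w) [] with hr | hr
  · simp [ValidBlocks, hr, blocks_nil]
  have hwr := hw.of_suffix (blockRest_suffix w)
  obtain ⟨hne', htail, hdrop⟩ := validBlocks_blocks hwr hr
  refine ⟨List.cons_ne_nil _ _, ?_, ?_⟩
  · rw [blocks_cons hwr hr, List.tail_cons] at htail
    rw [List.tail_cons, blocks_cons hwr hr, List.forall_mem_cons]
    exact ⟨firstBlock_fst_pos (head?_blockRest hw hr), htail⟩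
  · rw [List.dropLast_cons_of_ne_nil hne', List.forall_mem_cons]
    exact ⟨firstBlock_snd_pos hw hr, hdrop⟩
termination_by w.length
decreasing_by exact length_blockRest_lt hw hne

theorem blocks_snd_le_one {w : List ℕ} (hw : IsBinary w)
    (hc : w.IsChain fun x y => ¬(x = 2 ∧ y = 2)) : ∀ p ∈ blocks w, p.2 ≤ 1 := by
  rcases eq_or_ne w [] with rfl | hne
  · simp [blocks_nil]
  rw [blocks_cons hw hne, List.forall_mem_cons]
  exact ⟨firstBlock_snd_le_one hc, blocks_snd_le_one (hw.of_suffix (blockRest_suffix w))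
    (hc.suffix (blockRest_suffix w))⟩
termination_by w.length
decreasing_by exact length_blockRest_lt hw hne

theorem gammaBlocks_cons_of_ne_nil (m0 n0 : ℕ) {rest : List (ℕ × ℕ)} (h : rest ≠ []) :
    gammaBlocks ((m0, n0) :: rest) =
      List.replicate m0 1
        ++ rest.dropLast.flatMap (fun p => 2 :: List.replicate (p.1 - 1) 1)
        ++ (2 :: List.replicate (rest.getLastD (0,0)).1 1)
        ++ ((n0 :: rest.map Prod.snd).dropLast.dropLast.flatMap
              (fun nj => List.replicate (nj - 1) 2 ++ [1])
            ++ List.replicate ((n0 :: rest.map Prod.snd).dropLast.getLastD 0 - 1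
              + (n0 :: rest.map Prod.snd).getLastD 0) 2) := by
  rcases rest with _ | ⟨r, rest⟩
  · exact absurd rfl h
  · rfl

theorem psiBlocks_eq_gammaBlocks {bs : List (ℕ × ℕ)} (hm : ∀ p ∈ bs.tail, 0 < p.1)
    (hn : ∀ p ∈ bs.dropLast, p.2 = 1) : psiBlocks bs = gammaBlocks bs := by
  rcases bs with _ | ⟨⟨m0, n0⟩, rest⟩
  · rfl
  rcases List.eq_nil_or_concat' rest with rfl | ⟨rs, a, rfl⟩
  · simp [psiBlocks, gammaBlocks]
  have hdrop : ((m0, n0) :: (rs ++ [a])).dropLast = (m0, n0) :: rs := by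
    rw [← List.cons_append, List.dropLast_concat]
  rw [hdrop] at hn
  have hns : n0 :: (rs ++ [a]).map Prod.snd = List.replicate rs.length 1 ++ [1] ++ [a.2] := by
    rw [List.map_append, ← List.cons_append, ← List.replicate_succ']
    exact congrArg (· ++ _) (List.eq_replicate_iff.2
      ⟨by simp, (List.forall_mem_map (l := (m0, n0) :: rs) (f := Prod.snd) (P := (· = 1))).2 hn⟩)
  obtain ⟨k, hk⟩ : ∃ k, a.1 = k + 1 := Nat.exists_eq_succ_of_ne_zero (hm a (by simp)).ne'
  have hlast : ((m0, n0) :: (rs ++ [a])).getLastD (0, 0) = a := by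
    rw [← List.cons_append, List.getLastD_concat]
  rw [gammaBlocks_cons_of_ne_nil _ _ (by simp), hns, psiBlocks, hdrop, hlast,
    List.flatMap_eq_replicate (l := (m0, n0) :: rs) (c := 1) fun p hp => by simp [hn p hp]]
  simp only [List.dropLast_concat, List.getLastD_concat]
  rw [List.flatMap_eq_replicate (l := List.replicate rs.length 1) (c := 1)
    fun x hx => by simp [List.eq_of_mem_replicate hx]]
  have hshift : List.replicate k 1 ++ (List.replicate (rs.length + 1) 1 ++ List.replicate a.2 2)
      = List.replicate (k + 1) 1 ++ (List.replicate rs.length 1 ++ List.replicate a.2 2) := by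
    simp only [← List.append_assoc, List.replicate_append_replicate]
    congr 2
    omega
  simp only [hk, List.headD_cons, List.tail_cons, List.flatMap_append, List.flatMap_cons,
    List.flatMap_nil, List.append_nil, Nat.add_sub_cancel, List.length_cons, List.length_replicate,
    Nat.sub_self, Nat.zero_add, List.append_assoc, List.cons_append, hshift]

theorem psi_eq_gamma_of_mem_GSet {n : ℕ} {w : List ℕ} (hw : w ∈ GSet n) : Psi w = Gamma w := by
  obtain ⟨hb, -, hc⟩ := hw
  rcases eq_or_ne w [] with rfl | hne
  · rfl
  obtain ⟨-, hm, hpos⟩ := validBlocks_blocks hb hne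
  exact psiBlocks_eq_gammaBlocks hm fun p hp =>
    le_antisymm (blocks_snd_le_one hb hc p (List.dropLast_subset _ hp)) (hpos p hp)

theorem stmt_14 (n : ℕ) :
    (∀ w ∈ GSet n, Psi w = Gamma w) ∧ Psi '' GSet n = Gamma '' GSet n :=
  ⟨fun _ hw => psi_eq_gamma_of_mem_GSet hw,
    Set.image_congr fun _ hw => psi_eq_gamma_of_mem_GSet hw⟩
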